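/- Let G be a graph with no 2-factor and (A,B) a biased barrier of G. Then |B| ≥ |A| + ∑_{t≥1} t·|𝒞_{2t+1}| + 1, where 𝒞_s is the set of components H of G − (A ∪ B) with e(H,B) = s. -/

import Mathlib

open SimpleGraph

variable {V : Type*}

/-- The number of (ordered) pairs giving edges between `X` and `Y`;
for disjoint `X`, `Y` this is the number of edges between `X` and `Y`. -/
noncomputable def eB (G : SimpleGraph V) (X Y : Set V) : ℕ :=
  Set.ncard {p : V × V | p.1 ∈ X ∧ p.2 ∈ Y ∧ G.Adj p.1 p.2}

/-- The vertex set (in `V`) of a connected component of the induced subgraph on `U`. -/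
def compSupp (G : SimpleGraph V) (U : Set V)
    (C : (G.induce U).ConnectedComponent) : Set V :=
  Subtype.val '' C.supp

/-- `δ(A,B) = 2|A| - 2|B| + ∑_{v ∈ B} d_{G-A}(v) - o(A,B)`, where `o(A,B)` is the
number of components of `G - (A ∪ B)` sending an odd number of edges to `B`. -/
noncomputable def deltaAB (G : SimpleGraph V) (A B : Set V) : ℤ :=
  2 * A.ncard - 2 * B.ncard + eB G B Aᶜ -
    Nat.card {C : (G.induce (A ∪ B)ᶜ).ConnectedComponent //
      Odd (eB G (compSupp G (A ∪ B)ᶜ C) B)}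

/-- A barrier (Tutte pair) of `G`. -/
def IsBarrier (G : SimpleGraph V) (A B : Set V) : Prop :=
  Disjoint A B ∧ deltaAB G A B ≤ -2

/-- A biased barrier: a barrier maximizing `|A|` and, subject to that, minimizing `|B|`. -/
def IsBiasedBarrier (G : SimpleGraph V) (A B : Set V) : Prop :=
  IsBarrier G A B ∧
    ∀ A' B' : Set V, IsBarrier G A' B' →
      A'.ncard ≤ A.ncard ∧ (A'.ncard = A.ncard → B.ncard ≤ B'.ncard)

/-- A `2`-factor is a `2`-regular spanning subgraph. -/
def HasTwoFactor (G : SimpleGraph V) : Prop :=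
  ∃ H : SimpleGraph V, H ≤ G ∧ ∀ v : V, (H.neighborSet v).ncard = 2

/-- The number of components of `G - S`. -/
noncomputable def numComp (G : SimpleGraph V) (S : Set V) : ℕ :=
  Nat.card ((G.induce Sᶜ).ConnectedComponent)

/-- `G` is `t`-tough: every vertex cut `S` satisfies `|S| ≥ t · c(G - S)`. -/
def Tough (t : ℝ) (G : SimpleGraph V) : Prop :=
  ∀ S : Set V, 2 ≤ numComp G S → t * (numComp G S : ℝ) ≤ (S.ncard : ℝ)

/-- The toughness `τ(G) = min_S |S| / c(G - S)` over vertex cuts `S`. -/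
noncomputable def toughness (G : SimpleGraph V) : ℝ :=
  sInf {r : ℝ | ∃ S : Set V, 2 ≤ numComp G S ∧ r = (S.ncard : ℝ) / (numComp G S : ℝ)}

/-- `G` is `k`-connected. -/
def KConnected (k : ℕ) (G : SimpleGraph V) : Prop :=
  k < Nat.card V ∧ ∀ S : Set V, S.ncard < k → (G.induce Sᶜ).Connected

/-- The independence number `α(G)`. -/
noncomputable def indepNum (G : SimpleGraph V) : ℕ :=
  sSup {n : ℕ | ∃ s : Set V, (∀ u ∈ s, ∀ v ∈ s, ¬ G.Adj u v) ∧ s.ncard = n}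

/-- The minimum degree `δ(G)`. -/
noncomputable def minDeg (G : SimpleGraph V) : ℕ :=
  sInf {d : ℕ | ∃ v : V, (G.neighborSet v).ncard = d}

/-- `H` occurs as an induced subgraph of `G`. -/
def IsInducedCopy {W : Type*} (H : SimpleGraph W) (G : SimpleGraph V) : Prop :=
  ∃ f : W ↪ V, ∀ a b : W, G.Adj (f a) (f b) ↔ H.Adj a b

/-- The disjoint union `P_m ∪ k·P_1` of a path on `m` vertices and `k` isolated vertices. -/
def pathUnion (m k : ℕ) : SimpleGraph (Fin m ⊕ Fin k) where
  Adj a b := ∃ i j : Fin m, a = Sum.inl i ∧ b = Sum.inl j ∧ (pathGraph m).Adj i j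
  symm := by refine ⟨?_⟩; rintro a b ⟨i, j, rfl, rfl, h⟩; exact ⟨j, i, rfl, rfl, h.symm⟩
  loopless := by
    refine ⟨?_⟩
    rintro a ⟨i, j, rfl, hj, h⟩
    obtain rfl := Sum.inl.inj hj
    exact (pathGraph m).ne_of_adj h rfl

/-- The join `G ∨ H` of two graphs. -/
def joinG {α β : Type*} (G : SimpleGraph α) (H : SimpleGraph β) :
    SimpleGraph (α ⊕ β) where
  Adj x y :=
    match x, y with
    | Sum.inl a, Sum.inl b => G.Adj a b
    | Sum.inr a, Sum.inr b => H.Adj a b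
    | _, _ => True
  symm := by refine ⟨?_⟩; rintro (a | a) (b | b) h <;> simp_all <;> exact h.symm
  loopless := by refine ⟨?_⟩; rintro (a | a) h <;> simp_all

/-- `a` disjoint copies of the complete graph `K_b`. -/
def cliquesG (a b : ℕ) : SimpleGraph (Fin a × Fin b) where
  Adj p q := p.1 = q.1 ∧ p.2 ≠ q.2
  symm := by refine ⟨?_⟩; rintro p q ⟨h1, h2⟩; exact ⟨h1.symm, h2.symm⟩
  loopless := by refine ⟨?_⟩; rintro p ⟨_, h⟩; exact h rfl

/-- The graph `H_n`: `K_n ∨ (K̄_{2n+1} ∪ K_{2n+1})` together with a perfect matching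
between the independent part and the clique part. -/
def Hgraph (n : ℕ) :
    SimpleGraph (Fin n ⊕ (Fin (2 * n + 1) ⊕ Fin (2 * n + 1))) where
  Adj x y := x ≠ y ∧
    match x, y with
    | Sum.inl _, _ => True
    | _, Sum.inl _ => True
    | Sum.inr (Sum.inl _), Sum.inr (Sum.inl _) => False
    | Sum.inr (Sum.inr _), Sum.inr (Sum.inr _) => True
    | Sum.inr (Sum.inl i), Sum.inr (Sum.inr j) => i = j
    | Sum.inr (Sum.inr i), Sum.inr (Sum.inl j) => i = j
  symm := by
    refine ⟨?_⟩
    rintro (a | a | a) (b | b | b) ⟨hne, h⟩ <;>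
      exact ⟨Ne.symm hne, by simp_all⟩
  loopless := by refine ⟨?_⟩; rintro x ⟨hne, _⟩; exact hne rfl

/-!
The bound is a rearrangement of the barrier inequality `δ(A,B) ≤ -2`. The components of
`G - (A ∪ B)` partition `V - (A ∪ B)`, so their edges to `B` number at most
`∑_{v ∈ B} d_{G-A}(v)`; a component in `𝒞_{2t+1}` contributes `2t + 1`, of which the `1` is
cancelled by its count in `o(A,B)`. Hence `2|A| - 2|B| + 2 ∑_t t |𝒞_{2t+1}| ≤ -2`.
-/

open scoped Function

section Arith

variable {α : Type*} [Fintype α]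

lemma hasSum_mul_card_eq_two_mul_add_one (f : α → ℕ) :
    HasSum (fun t : ℕ => t * Nat.card {a // f a = 2 * t + 1})
      (∑ a, if Odd (f a) then f a / 2 else 0) := by
  classical
  have hfiber (t : ℕ) : t * Nat.card {a // f a = 2 * t + 1} =
      ∑ a, if f a = 2 * t + 1 then t else 0 := by
    rw [Nat.card_eq_fintype_card, Fintype.card_subtype, Finset.card_filter, Finset.mul_sum]
    simp only [mul_ite, mul_one, mul_zero]
  simp only [hfiber]
  refine hasSum_sum fun a _ => ?_
  by_cases hodd : Odd (f a)
  · obtain ⟨k, hk⟩ := hodd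
    rw [if_pos ⟨k, hk⟩, show f a / 2 = k by omega]
    convert hasSum_ite_eq k k using 2 with t
    grind
  · rw [if_neg hodd]
    convert hasSum_zero with t
    grind

lemma two_mul_tsum_mul_card_add_card_odd_le_sum (f : α → ℕ) :
    2 * ∑' t : ℕ, t * Nat.card {a // f a = 2 * t + 1} + Nat.card {a // Odd (f a)}
      ≤ ∑ a, f a := by
  classical
  rw [(hasSum_mul_card_eq_two_mul_add_one f).tsum_eq, Nat.card_eq_fintype_card,
    Fintype.card_subtype, Finset.card_filter, Finset.mul_sum, ← Finset.sum_add_distrib]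
  refine Finset.sum_le_sum fun a _ => ?_
  split_ifs with hodd
  · have := Nat.two_mul_div_two_add_one_of_odd hodd
    omega
  · simp
end Arith


lemma eB_comm (G : SimpleGraph V) (X Y : Set V) : eB G X Y = eB G Y X := by
  unfold eB
  rw [← Set.ncard_image_of_injective _ Prod.swap_injective]
  congr 1
  ext ⟨u, v⟩
  simp [G.adj_comm, and_comm, and_left_comm]

lemma eB_mono_left [Finite V] (G : SimpleGraph V) {X X' : Set V} (h : X ⊆ X') (Y : Set V) :
    eB G X Y ≤ eB G X' Y :=
  Set.ncard_le_ncard (fun _ hp => ⟨h hp.1, hp.2⟩)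

lemma eB_iUnion_left [Finite V] {ι : Type*} [Fintype ι] (G : SimpleGraph V) {X : ι → Set V}
    (hX : Pairwise (Disjoint on X)) (Y : Set V) :
    eB G (⋃ i, X i) Y = ∑ i, eB G (X i) Y := by
  unfold eB
  rw [← finsum_eq_sum_of_fintype, ← Set.ncard_iUnion_of_finite (fun _ => Set.toFinite _)]
  · congr 1
    ext p
    simp
  · exact fun i j hij => Set.disjoint_left.2 fun p hi hj => Set.disjoint_left.1 (hX hij) hi.1 hj.1

lemma iUnion_compSupp (G : SimpleGraph V) (U : Set V) : ⋃ C, compSupp G U C = U := by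
  simp only [compSupp, ← Set.image_iUnion, iUnion_connectedComponentSupp, Set.image_univ,
    Subtype.range_coe]

lemma pairwise_disjoint_compSupp (G : SimpleGraph V) (U : Set V) :
    Pairwise (Disjoint on compSupp G U) := fun _ _ h =>
  (Set.disjoint_image_iff Subtype.val_injective).2 (pairwise_disjoint_supp_connectedComponent _ h)

lemma sum_eB_compSupp [Finite V] (G : SimpleGraph V) (U Y : Set V)
    [Fintype (G.induce U).ConnectedComponent] :
    ∑ C, eB G (compSupp G U C) Y = eB G U Y := by
  rw [← eB_iUnion_left G (pairwise_disjoint_compSupp G U), iUnion_compSupp]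

theorem stmt7_general {V : Type*} [Fintype V] (G : SimpleGraph V) (A B : Set V)
    (hAB : IsBiasedBarrier G A B) :
    A.ncard + (∑' t : ℕ, t * Nat.card {C : (G.induce (A ∪ B)ᶜ).ConnectedComponent //
      eB G (compSupp G (A ∪ B)ᶜ C) B = 2 * t + 1}) + 1 ≤ B.ncard := by
  classical
  have hδ := hAB.1.2
  have hsum := two_mul_tsum_mul_card_add_card_odd_le_sum fun C => eB G (compSupp G (A ∪ B)ᶜ C) B
  rw [sum_eB_compSupp, eB_comm] at hsum
  have hmono : eB G B (A ∪ B)ᶜ ≤ eB G B Aᶜ := by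
    rw [eB_comm, eB_comm G B]
    exact eB_mono_left G (Set.compl_subset_compl.2 Set.subset_union_left) B
  unfold deltaAB at hδ
  omega

theorem stmt7 {V : Type*} [Fintype V] (G : SimpleGraph V) (A B : Set V)
    (hG : ¬ HasTwoFactor G) (hAB : IsBiasedBarrier G A B) :
    A.ncard + (∑' t : ℕ, t * Nat.card {C : (G.induce (A ∪ B)ᶜ).ConnectedComponent //
      eB G (compSupp G (A ∪ B)ᶜ C) B = 2 * t + 1}) + 1 ≤ B.ncard :=
  stmt7_general G A B hAB
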